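/- Let R be a commutative local ring and s ∈ R. The ring K_s(R) is quasipolar if and only if for every A ∈ K_s(R) with det_s(A) ∈ J(R), either tr(A) ∈ J(R) or the equation x² − tr(A)x + det_s(A) = 0 has a solution in R. -/

import Mathlib

/-- The generalized matrix ring `K_s(R)` with multiplier `s`. -/
@[ext]
structure GenMatrix (R : Type*) (s : R) where
  a : R
  b : R
  c : R
  d : R

namespace GenMatrix

variable {R : Type*} [Ring R] {s : R}

instance : Add (GenMatrix R s) :=
  ⟨fun X Y => ⟨X.a + Y.a, X.b + Y.b, X.c + Y.c, X.d + Y.d⟩⟩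
instance : Neg (GenMatrix R s) := ⟨fun X => ⟨-X.a, -X.b, -X.c, -X.d⟩⟩
instance : Zero (GenMatrix R s) := ⟨⟨0, 0, 0, 0⟩⟩
instance : One (GenMatrix R s) := ⟨⟨1, 0, 0, 1⟩⟩
instance : Mul (GenMatrix R s) :=
  ⟨fun X Y => ⟨X.a * Y.a + s * (X.b * Y.c), X.a * Y.b + X.b * Y.d,
    X.c * Y.a + X.d * Y.c, s * (X.c * Y.b) + X.d * Y.d⟩⟩

@[simp] lemma add_a (X Y : GenMatrix R s) : (X + Y).a = X.a + Y.a := rfl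
@[simp] lemma add_b (X Y : GenMatrix R s) : (X + Y).b = X.b + Y.b := rfl
@[simp] lemma add_c (X Y : GenMatrix R s) : (X + Y).c = X.c + Y.c := rfl
@[simp] lemma add_d (X Y : GenMatrix R s) : (X + Y).d = X.d + Y.d := rfl
@[simp] lemma neg_a (X : GenMatrix R s) : (-X).a = -X.a := rfl
@[simp] lemma neg_b (X : GenMatrix R s) : (-X).b = -X.b := rfl
@[simp] lemma neg_c (X : GenMatrix R s) : (-X).c = -X.c := rfl
@[simp] lemma neg_d (X : GenMatrix R s) : (-X).d = -X.d := rfl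
@[simp] lemma zero_a : (0 : GenMatrix R s).a = 0 := rfl
@[simp] lemma zero_b : (0 : GenMatrix R s).b = 0 := rfl
@[simp] lemma zero_c : (0 : GenMatrix R s).c = 0 := rfl
@[simp] lemma zero_d : (0 : GenMatrix R s).d = 0 := rfl
@[simp] lemma one_a : (1 : GenMatrix R s).a = 1 := rfl
@[simp] lemma one_b : (1 : GenMatrix R s).b = 0 := rfl
@[simp] lemma one_c : (1 : GenMatrix R s).c = 0 := rfl
@[simp] lemma one_d : (1 : GenMatrix R s).d = 1 := rfl
@[simp] lemma mul_a (X Y : GenMatrix R s) : (X * Y).a = X.a * Y.a + s * (X.b * Y.c) := rfl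
@[simp] lemma mul_b (X Y : GenMatrix R s) : (X * Y).b = X.a * Y.b + X.b * Y.d := rfl
@[simp] lemma mul_c (X Y : GenMatrix R s) : (X * Y).c = X.c * Y.a + X.d * Y.c := rfl
@[simp] lemma mul_d (X Y : GenMatrix R s) : (X * Y).d = s * (X.c * Y.b) + X.d * Y.d := rfl

instance : AddCommGroup (GenMatrix R s) where
  add_assoc X Y Z := by ext <;> simp [add_assoc]
  zero_add X := by ext <;> simp
  add_zero X := by ext <;> simp
  add_comm X Y := by ext <;> simp [add_comm]
  neg_add_cancel X := by ext <;> simp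
  nsmul := nsmulRec
  zsmul := zsmulRec

section Central

variable [Fact (s ∈ Set.center R)]

lemma scomm (r : R) : r * s = s * r := Semigroup.mem_center_iff.mp Fact.out r

lemma sshift (r t : R) : r * (s * t) = s * (r * t) := by
  rw [← mul_assoc, scomm (s := s), mul_assoc]

instance : Ring (GenMatrix R s) where
  __ := (inferInstance : AddCommGroup (GenMatrix R s))
  left_distrib X Y Z := by ext <;> simp [mul_add, add_mul] <;> abel
  right_distrib X Y Z := by ext <;> simp [mul_add, add_mul] <;> abel
  zero_mul X := by ext <;> simp
  mul_zero X := by ext <;> simp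
  mul_assoc X Y Z := by
    ext <;> simp only [mul_a, mul_b, mul_c, mul_d, mul_add, add_mul, mul_assoc, sshift] <;> abel
  one_mul X := by ext <;> simp
  mul_one X := by ext <;> simp

end Central

instance central_of_comm {R : Type*} [CommRing R] (s : R) : Fact (s ∈ Set.center R) :=
  ⟨by rw [Set.center_eq_univ]; trivial⟩

/-- `det_s` of a generalized matrix over a commutative ring. -/
def dets {R : Type*} {s : R} [CommRing R] (A : GenMatrix R s) : R :=
  A.a * A.d - s * (A.b * A.c)

/-- The trace of a generalized matrix. -/
def tr {R : Type*} {s : R} [Ring R] (A : GenMatrix R s) : R := A.a + A.d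

end GenMatrix

/-- An element `a` is quasinilpotent if `1 + a*x` is a unit for every `x` commuting with `a`. -/
def IsQuasinilpotent {R : Type*} [Ring R] (a : R) : Prop :=
  ∀ x : R, a * x = x * a → IsUnit (1 + a * x)

/-- An element `a` is quasipolar if there is an idempotent `p` in the double commutant of `a`
with `a + p` a unit and `a * p` quasinilpotent. -/
def IsQuasipolar {R : Type*} [Ring R] (a : R) : Prop :=
  ∃ p : R, IsIdempotentElem p ∧ (∀ y : R, y * a = a * y → p * y = y * p) ∧
    IsUnit (a + p) ∧ IsQuasinilpotent (a * p)

/-- A ring is quasipolar if every element is quasipolar. -/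
def IsQuasipolarRing (R : Type*) [Ring R] : Prop := ∀ a : R, IsQuasipolar a

/-- An element is strongly clean if it is the sum of an idempotent and a unit that commute. -/
def IsStronglyClean {R : Type*} [Ring R] (a : R) : Prop :=
  ∃ e u : R, IsIdempotentElem e ∧ IsUnit u ∧ a = e + u ∧ e * u = u * e

/-- A ring is strongly clean if every element is strongly clean. -/
def IsStronglyCleanRing (R : Type*) [Ring R] : Prop := ∀ a : R, IsStronglyClean a

/-- `a` is similar to `b` if `b = u⁻¹ * a * u` for some unit `u`. -/
def IsSimilar {R : Type*} [Ring R] (a b : R) : Prop :=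
  ∃ u : Rˣ, b = ↑u⁻¹ * a * ↑u

/-- The Jacobson radical of a ring: the intersection of all maximal left ideals. -/
def JacobsonRadical (R : Type*) [Ring R] : Ideal R := Ideal.jacobson ⊥

/-! Over a commutative ring, `det_s` is multiplicative and every `X ∈ K_s(R)` satisfies the
Cayley–Hamilton identity `X² = tr X • X - det_s X`. Hence `X` is a unit iff `det_s X` is, and over
a local ring with maximal ideal `𝔪` an idempotent is `0`, `1`, or has `det_s = 0` and `tr = 1`;
moreover `A` is quasinilpotent iff `tr A, det_s A ∈ 𝔪`. If `A` is quasipolar with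
`det_s A ∈ 𝔪` and `tr A ∉ 𝔪`, its idempotent `p` is of the third kind, and then `tr (A p)` is a
root of `x² - tr A x + det_s A`. Conversely, a root `x ∈ 𝔪` whose companion root `y` is a unit
gives the spectral idempotent `p = (A - y) / (x - y)`, with `A p = x p` and
`det_s (A + p) = y (1 + x)`. -/

namespace GenMatrix

variable {R : Type*} [CommRing R] {s : R}

instance : SMul R (GenMatrix R s) := ⟨fun r X => ⟨r * X.a, r * X.b, r * X.c, r * X.d⟩⟩

@[simp] lemma smul_a (r : R) (X : GenMatrix R s) : (r • X).a = r * X.a := rfl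
@[simp] lemma smul_b (r : R) (X : GenMatrix R s) : (r • X).b = r * X.b := rfl
@[simp] lemma smul_c (r : R) (X : GenMatrix R s) : (r • X).c = r * X.c := rfl
@[simp] lemma smul_d (r : R) (X : GenMatrix R s) : (r • X).d = r * X.d := rfl

instance : Algebra R (GenMatrix R s) where
  algebraMap :=
    { toFun r := ⟨r, 0, 0, r⟩
      map_one' := rfl
      map_mul' r t := by ext <;> simp
      map_zero' := rfl
      map_add' r t := by ext <;> simp }
  commutes' r X := by ext <;> simp [mul_comm]
  smul_def' r X := by ext <;> simp

@[simp] lemma algebraMap_a (r : R) : (algebraMap R (GenMatrix R s) r).a = r := rfl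
@[simp] lemma algebraMap_b (r : R) : (algebraMap R (GenMatrix R s) r).b = 0 := rfl
@[simp] lemma algebraMap_c (r : R) : (algebraMap R (GenMatrix R s) r).c = 0 := rfl
@[simp] lemma algebraMap_d (r : R) : (algebraMap R (GenMatrix R s) r).d = r := rfl
@[simp] lemma sub_a (X Y : GenMatrix R s) : (X - Y).a = X.a - Y.a := by simp [sub_eq_add_neg]
@[simp] lemma sub_b (X Y : GenMatrix R s) : (X - Y).b = X.b - Y.b := by simp [sub_eq_add_neg]
@[simp] lemma sub_c (X Y : GenMatrix R s) : (X - Y).c = X.c - Y.c := by simp [sub_eq_add_neg]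
@[simp] lemma sub_d (X Y : GenMatrix R s) : (X - Y).d = X.d - Y.d := by simp [sub_eq_add_neg]

lemma tr_sub (X Y : GenMatrix R s) : tr (X - Y) = tr X - tr Y := by
  simp only [tr, sub_a, sub_d]; ring

lemma tr_smul (r : R) (X : GenMatrix R s) : tr (r • X) = r * tr X := by
  simp only [tr, smul_a, smul_d]; ring

lemma tr_algebraMap (r : R) : tr (algebraMap R (GenMatrix R s) r) = 2 * r := by
  simp only [tr, algebraMap_a, algebraMap_d]; ring

lemma dets_mul (X Y : GenMatrix R s) : dets (X * Y) = dets X * dets Y := by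
  simp only [dets, mul_a, mul_b, mul_c, mul_d]; ring

lemma dets_smul (r : R) (X : GenMatrix R s) : dets (r • X) = r ^ 2 * dets X := by
  simp only [dets, smul_a, smul_b, smul_c, smul_d]; ring

lemma dets_add (X Y : GenMatrix R s) :
    dets (X + Y) = dets X + dets Y + tr X * tr Y - tr (X * Y) := by
  simp only [dets, tr, add_a, add_b, add_c, add_d, mul_a, mul_d]; ring

lemma dets_one_add (X : GenMatrix R s) : dets (1 + X) = 1 + tr X + dets X := by
  simp only [dets, tr, add_a, add_b, add_c, add_d, one_a, one_b, one_c, one_d]; ring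

lemma dets_one_sub (X : GenMatrix R s) : dets (1 - X) = 1 - tr X + dets X := by
  simp only [dets, tr, sub_a, sub_b, sub_c, sub_d, one_a, one_b, one_c, one_d]; ring

lemma dets_sub_algebraMap (X : GenMatrix R s) (r : R) :
    dets (X - algebraMap R (GenMatrix R s) r) = r ^ 2 - tr X * r + dets X := by
  simp only [dets, tr, sub_a, sub_b, sub_c, sub_d, algebraMap_a, algebraMap_b, algebraMap_c,
    algebraMap_d]; ring

@[simps]
def detsMonoidHom : GenMatrix R s →* R where
  toFun := dets
  map_one' := by simp [dets]
  map_mul' := dets_mul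

theorem mul_self_eq_tr_smul_sub_dets (X : GenMatrix R s) :
    X * X = tr X • X - algebraMap R (GenMatrix R s) (dets X) := by
  ext <;> simp [tr, dets] <;> ring

theorem isUnit_iff_isUnit_dets {X : GenMatrix R s} : IsUnit X ↔ IsUnit (dets X) := by
  refine ⟨IsUnit.map detsMonoidHom, fun h => ?_⟩
  let Y : GenMatrix R s := h.unit⁻¹.1 • ⟨X.d, -X.b, -X.c, X.a⟩
  refine ⟨⟨X, Y, ?_, ?_⟩, rfl⟩ <;> ext <;> simp [Y, dets] <;> ring

instance [Nontrivial R] : Nontrivial (GenMatrix R s) :=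
  ⟨⟨0, 1, fun h => zero_ne_one (congrArg a h)⟩⟩

lemma tr_mul_self (X : GenMatrix R s) : tr (X * X) = tr X ^ 2 - 2 * dets X := by
  simp only [tr, dets, mul_a, mul_d]; ring

lemma mul_sub_algebraMap_eq_smul {A : GenMatrix R s} {x y : R} (hsum : x + y = tr A)
    (hprod : x * y = dets A) :
    A * (A - algebraMap R _ y) = x • (A - algebraMap R _ y) := by
  rw [mul_sub, mul_self_eq_tr_smul_sub_dets, ← Algebra.commutes, ← Algebra.smul_def, ← hsum,
    ← hprod, map_mul, ← Algebra.smul_def, smul_sub]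
  module

theorem tr_mul_mem_of_commute {I : Ideal R} [I.IsPrime] {A X : GenMatrix R s}
    (htr : tr A ∈ I) (hdets : dets A ∈ I) (hAX : Commute A X) : tr (A * X) ∈ I := by
  have hsq : tr (A * X * (A * X)) = tr A * tr (A * (X * X)) - dets A * tr (X * X) := by
    rw [hAX.symm.mul_mul_mul_comm, mul_self_eq_tr_smul_sub_dets A, sub_mul, smul_mul_assoc,
      ← Algebra.smul_def, tr_sub, tr_smul, tr_smul]
  have hpow : tr (A * X) ^ 2 = tr A * tr (A * (X * X)) - dets A * tr (X * X)
      + 2 * (dets A * dets X) := by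
    rw [← hsq, tr_mul_self, dets_mul]; ring
  refine Ideal.IsPrime.mem_of_pow_mem ‹_› 2 ?_
  rw [hpow]
  exact add_mem (sub_mem (I.mul_mem_right _ htr) (I.mul_mem_right _ hdets))
    (I.mul_mem_left _ (I.mul_mem_right _ hdets))

theorem tr_mul_sq_sub_add_dets_eq_zero {A p : GenMatrix R s} (hp : IsIdempotentElem p)
    (hAp : Commute A p) (hdets : dets p = 0) (htr : tr p = 1) :
    tr (A * p) ^ 2 - tr A * tr (A * p) + dets A = 0 := by
  have hsq : A * p * (A * p) = A * A * p := by
    rw [hAp.symm.mul_mul_mul_comm, hp.eq]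
  have := congrArg tr hsq
  rw [tr_mul_self, dets_mul, hdets, mul_self_eq_tr_smul_sub_dets A, sub_mul, smul_mul_assoc,
    ← Algebra.smul_def, tr_sub, tr_smul, tr_smul, htr] at this
  linear_combination this

end GenMatrix

namespace IsLocalRing

variable {R : Type*} [CommRing R] [IsLocalRing R]

theorem eq_zero_or_eq_one_of_isIdempotentElem {e : R} (he : IsIdempotentElem e) :
    e = 0 ∨ e = 1 := by
  rcases isUnit_or_isUnit_one_sub_self e with h | h
  · exact Or.inr ((IsIdempotentElem.iff_eq_one_of_isUnit h).mp he)
  · exact Or.inl (sub_eq_self.mp ((IsIdempotentElem.iff_eq_one_of_isUnit h).mp he.one_sub))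

theorem isUnit_one_add_of_mem_maximalIdeal {x : R} (hx : x ∈ maximalIdeal R) :
    IsUnit (1 + x) := by
  simpa using isUnit_one_sub_self_of_mem_nonunits (-x) (neg_mem hx)

end IsLocalRing

theorem IsQuasipolar.of_isUnit {S : Type*} [Ring S] {a : S} (ha : IsUnit a) : IsQuasipolar a :=
  ⟨0, .zero, fun y _ => by rw [zero_mul, mul_zero], by rwa [add_zero],
    fun x _ => by rw [mul_zero, zero_mul, add_zero]; exact isUnit_one⟩

theorem IsQuasinilpotent.isQuasipolar {S : Type*} [Ring S] {a : S} (ha : IsQuasinilpotent a) :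
    IsQuasipolar a :=
  ⟨1, .one, fun y _ => by rw [one_mul, mul_one], by simpa [add_comm] using ha 1 (by simp),
    by rwa [mul_one]⟩

namespace GenMatrix

open IsLocalRing

variable {R : Type*} [CommRing R] [IsLocalRing R] {s : R}

theorem eq_zero_or_eq_one_or_of_isIdempotentElem {p : GenMatrix R s} (hp : IsIdempotentElem p) :
    p = 0 ∨ p = 1 ∨ (dets p = 0 ∧ tr p = 1) := by
  have hdets : IsIdempotentElem (dets p) := hp.map detsMonoidHom
  have hdets' : IsIdempotentElem (dets (1 - p)) := hp.one_sub.map detsMonoidHom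
  rcases eq_zero_or_eq_one_of_isIdempotentElem hdets with hdets | hdets
  · rcases eq_zero_or_eq_one_of_isIdempotentElem hdets' with h | h
    · rw [dets_one_sub, hdets] at h
      exact Or.inr (Or.inr ⟨hdets, by linear_combination -h⟩)
    · have hunit : IsUnit (1 - p) := isUnit_iff_isUnit_dets.mpr (h ▸ isUnit_one)
      exact Or.inl (sub_eq_self.mp ((IsIdempotentElem.iff_eq_one_of_isUnit hunit).mp hp.one_sub))
  · have hunit : IsUnit p := isUnit_iff_isUnit_dets.mpr (hdets ▸ isUnit_one)
    exact Or.inr (Or.inl ((IsIdempotentElem.iff_eq_one_of_isUnit hunit).mp hp))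

theorem isQuasinilpotent_iff {A : GenMatrix R s} :
    IsQuasinilpotent A ↔ tr A ∈ maximalIdeal R ∧ dets A ∈ maximalIdeal R := by
  refine ⟨fun hA => ?_, fun ⟨htr, hdets⟩ X hAX => ?_⟩
  · have hdets : dets A ∈ maximalIdeal R := by
      by_contra h
      obtain ⟨u, rfl⟩ := isUnit_iff_isUnit_dets.mpr (notMem_maximalIdeal.mp h)
      have hunit := hA (-↑u⁻¹) (by simp)
      rw [mul_neg, u.mul_inv, add_neg_cancel] at hunit
      exact not_isUnit_zero hunit
    refine ⟨?_, hdets⟩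
    by_contra htr
    obtain ⟨t, ht⟩ := notMem_maximalIdeal.mp htr
    have hunit := hA ((-↑t⁻¹ : R) • 1) (by rw [mul_smul_comm, smul_mul_assoc, mul_one, one_mul])
    rw [mul_smul_comm, mul_one, isUnit_iff_isUnit_dets, dets_one_add, tr_smul, dets_smul, ← ht]
      at hunit
    have hval : 1 + -↑t⁻¹ * ↑t + (-↑t⁻¹) ^ 2 * dets A = ↑t⁻¹ ^ 2 * dets A := by
      linear_combination (-1 : R) * t.inv_mul
    rw [hval] at hunit
    exact (mem_maximalIdeal _).mp ((maximalIdeal R).mul_mem_left _ hdets) hunit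
  · rw [isUnit_iff_isUnit_dets, dets_one_add, dets_mul, add_assoc]
    exact isUnit_one_add_of_mem_maximalIdeal
      (add_mem (tr_mul_mem_of_commute htr hdets hAX) ((maximalIdeal R).mul_mem_right _ hdets))

theorem isQuasipolar_of_eigenvalues {A : GenMatrix R s} {x y : R} (hsum : x + y = tr A)
    (hprod : x * y = dets A) (hx : x ∈ maximalIdeal R) (hy : y ∉ maximalIdeal R) :
    IsQuasipolar A := by
  have hxy : IsUnit (x - y) := notMem_maximalIdeal.mp fun h => hy (by simpa using sub_mem hx h)
  have hv : hxy.unit⁻¹.1 * (x - y) = 1 := hxy.val_inv_mul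
  set p : GenMatrix R s := hxy.unit⁻¹.1 • (A - algebraMap R _ y)
  have hAp : A * p = x • p := by
    rw [mul_smul_comm, mul_sub_algebraMap_eq_smul hsum hprod, smul_comm]
  have htr : tr p = 1 := by
    rw [tr_smul, tr_sub, tr_algebraMap, ← hsum]; linear_combination hv
  have hdets : dets p = 0 := by
    rw [dets_smul, dets_sub_algebraMap, ← hsum, ← hprod]; ring
  refine ⟨p, ?_, fun Y hY => ?_, ?_, ?_⟩
  · rw [IsIdempotentElem, mul_self_eq_tr_smul_sub_dets, htr, hdets, one_smul, map_zero, sub_zero]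
  · exact ((Commute.sub_left (hY.symm : Commute A Y) (Algebra.commutes y Y)).smul_left _).eq
  · rw [isUnit_iff_isUnit_dets, dets_add, hdets, htr, hAp, tr_smul, htr, ← hsum, ← hprod,
      show x * y + 0 + (x + y) * 1 - x * 1 = y * (1 + x) by ring]
    exact (notMem_maximalIdeal.mp hy).mul (isUnit_one_add_of_mem_maximalIdeal hx)
  · rw [hAp, isQuasinilpotent_iff, tr_smul, dets_smul, hdets, mul_zero]
    exact ⟨(maximalIdeal R).mul_mem_right _ hx, zero_mem _⟩

end GenMatrix

open GenMatrix IsLocalRing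

/-- over a commutative local ring `R`, `K_s(R)` is quasipolar iff for every
`A ∈ K_s(R)` with `det_s(A) ∈ J(R)`, either `tr(A) ∈ J(R)` or `x² - tr(A)x + det_s(A) = 0`
is solvable in `R`. -/
theorem genMatrix_isQuasipolarRing_iff {R : Type*} [CommRing R] [IsLocalRing R] (s : R) :
    IsQuasipolarRing (GenMatrix R s) ↔
      ∀ A : GenMatrix R s, GenMatrix.dets A ∈ JacobsonRadical R →
        (GenMatrix.tr A ∈ JacobsonRadical R ∨
          ∃ x : R, x ^ 2 - GenMatrix.tr A * x + GenMatrix.dets A = 0) := by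
  rw [JacobsonRadical, jacobson_eq_maximalIdeal ⊥ bot_ne_top]
  refine ⟨fun hR A hdets => or_iff_not_imp_left.mpr fun htr => ?_, fun h A => ?_⟩
  · obtain ⟨p, hp, hcomm, hunit, hnil⟩ := hR A
    rcases eq_zero_or_eq_one_or_of_isIdempotentElem hp with rfl | rfl | ⟨hdp, htp⟩
    · rw [add_zero, isUnit_iff_isUnit_dets] at hunit
      exact absurd hunit ((mem_maximalIdeal _).mp hdets)
    · rw [mul_one, isQuasinilpotent_iff] at hnil
      exact absurd hnil.1 htr
    · exact ⟨tr (A * p), tr_mul_sq_sub_add_dets_eq_zero hp (hcomm A rfl).symm hdp htp⟩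
  by_cases hunit : IsUnit (dets A)
  · exact .of_isUnit (isUnit_iff_isUnit_dets.mpr hunit)
  have hdets : dets A ∈ maximalIdeal R := (mem_maximalIdeal _).mpr hunit
  by_cases htr : tr A ∈ maximalIdeal R
  · exact (isQuasinilpotent_iff.mpr ⟨htr, hdets⟩).isQuasipolar
  obtain ⟨x, hx⟩ := (h A hdets).resolve_left htr
  have hsum : x + (tr A - x) = tr A := by ring
  have hprod : x * (tr A - x) = dets A := by linear_combination -hx
  rcases (maximalIdeal.isMaximal R).isPrime.mem_or_mem (hprod ▸ hdets) with hmem | hmem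
  · exact isQuasipolar_of_eigenvalues hsum hprod hmem fun h' => htr (hsum ▸ add_mem hmem h')
  · exact isQuasipolar_of_eigenvalues (by rwa [add_comm]) (by rwa [mul_comm]) hmem
      fun h' => htr (hsum ▸ add_mem h' hmem)
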